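/- Let G be a finite connected simple graph with n vertices and m edges, and let k be a natural number with m ≥ n·k. Then every DFS tree of G (rooted at any vertex) has height at least k; equivalently, it contains a root-to-leaf path with at least k+1 vertices. -/

import Mathlib

/-!
Orient every edge of `G` towards its deeper endpoint. In a DFS tree the shallower endpoint is
then an ancestor of the deeper one, and a vertex `v` has exactly one ancestor at each depth
below its own, so at most `depth v` edges point into `v`. Hence `m ≤ ∑ v, depth v ≤ n · height`.
-/

/-- `u` lies on the unique path in `T` from `r` to `v`
(characterized in a tree via distances). -/
def IsAncestor {V : Type*} (T : SimpleGraph V) (r u v : V) : Prop :=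
  T.dist r u + T.dist u v = T.dist r v

/-- `u` and `v` are comparable in the rooted tree `(T, r)`. -/
def TreeComparable {V : Type*} (T : SimpleGraph V) (r u v : V) : Prop :=
  IsAncestor T r u v ∨ IsAncestor T r v u

/-- `(T, r)` is a DFS tree of `G`. -/
def IsDFSTree {V : Type*} (G T : SimpleGraph V) (r : V) : Prop :=
  T ≤ G ∧ T.IsTree ∧ ∀ u v : V, G.Adj u v → TreeComparable T r u v

section

open Finset SimpleGraph

variable {V : Type*} {G T : SimpleGraph V} {r u v : V}

/-- Both ancestors lie on the unique `r`–`v` path, at the position given by their depth. -/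
theorem IsAncestor.eq_of_dist_eq (hT : T.IsTree) {u₁ u₂ : V} (h₁ : IsAncestor T r u₁ v)
    (h₂ : IsAncestor T r u₂ v) (hd : T.dist r u₁ = T.dist r u₂) : u₁ = u₂ := by
  have hc := hT.connected
  obtain ⟨p₁, hp₁⟩ := hc.exists_walk_length_eq_dist r u₁
  obtain ⟨q₁, hq₁⟩ := hc.exists_walk_length_eq_dist u₁ v
  obtain ⟨p₂, hp₂⟩ := hc.exists_walk_length_eq_dist r u₂
  obtain ⟨q₂, hq₂⟩ := hc.exists_walk_length_eq_dist u₂ v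
  have hpath₁ : (p₁.append q₁).IsPath :=
    (p₁.append q₁).isPath_of_length_eq_dist (by rw [Walk.length_append, hp₁, hq₁]; exact h₁)
  have hpath₂ : (p₂.append q₂).IsPath :=
    (p₂.append q₂).isPath_of_length_eq_dist (by rw [Walk.length_append, hp₂, hq₂]; exact h₂)
  have hsame : p₁.append q₁ = p₂.append q₂ := (hT.existsUnique_path r v).unique hpath₁ hpath₂
  have hget₁ : (p₁.append q₁).getVert (T.dist r u₁) = u₁ := by
    rw [Walk.getVert_append, hp₁]; simp
  have hget₂ : (p₂.append q₂).getVert (T.dist r u₂) = u₂ := by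
    rw [Walk.getVert_append, hp₂]; simp
  rw [← hget₁, ← hget₂, hsame, hd]

namespace IsDFSTree

theorem isAncestor_of_adj_of_dist_lt (h : IsDFSTree G T r) (ha : G.Adj u v)
    (hlt : T.dist r u < T.dist r v) : IsAncestor T r u v := by
  refine (h.2.2 u v ha).resolve_right fun hvu => ?_
  have hpos : 0 < T.dist v u := h.2.1.connected.pos_dist_of_ne ha.ne.symm
  unfold IsAncestor at hvu
  omega

theorem dist_ne_of_adj (h : IsDFSTree G T r) (ha : G.Adj u v) : T.dist r u ≠ T.dist r v := by
  have hpos : 0 < T.dist u v := h.2.1.connected.pos_dist_of_ne ha.ne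
  have hpos' : 0 < T.dist v u := h.2.1.connected.pos_dist_of_ne ha.ne.symm
  rcases h.2.2 u v ha with hanc | hanc <;> unfold IsAncestor at hanc <;> omega

theorem injOn_dist_shallower_neighbors (h : IsDFSTree G T r) :
    Set.InjOn (T.dist r) {u | G.Adj u v ∧ T.dist r u < T.dist r v} :=
  fun _ hu₁ _ hu₂ hd => IsAncestor.eq_of_dist_eq h.2.1
    (h.isAncestor_of_adj_of_dist_lt hu₁.1 hu₁.2) (h.isAncestor_of_adj_of_dist_lt hu₂.1 hu₂.2) hd

theorem card_edgeFinset_le_sum_dist [Fintype V] [Fintype G.edgeSet] (h : IsDFSTree G T r) :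
    #G.edgeFinset ≤ ∑ v, T.dist r v := by
  classical
  set S : Finset (V × V) := {p | G.Adj p.1 p.2 ∧ T.dist r p.1 < T.dist r p.2}
  have hsurj : Set.SurjOn (fun p : V × V => s(p.1, p.2)) S G.edgeFinset := by
    intro e he
    induction e with
    | _ u v =>
      have ha : G.Adj u v := by simpa using he
      rcases (h.dist_ne_of_adj ha).lt_or_gt with hlt | hlt
      · exact ⟨(u, v), by simp [S, ha, hlt], rfl⟩
      · exact ⟨(v, u), by simp [S, ha.symm, hlt], Sym2.eq_swap⟩
  have hfiber (v : V) : #{p ∈ S | p.2 = v} ≤ T.dist r v := by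
    refine (card_le_card_of_injOn (fun p => T.dist r p.1) (t := range (T.dist r v)) ?_ ?_).trans
      (card_range _).le
    · rintro ⟨u, w⟩ hp
      simp only [S, coe_filter, mem_filter, mem_univ, true_and] at hp
      simpa [← hp.2] using hp.1.2
    · rintro ⟨u₁, w₁⟩ hp₁ ⟨u₂, w₂⟩ hp₂ hd
      simp only [S, coe_filter, mem_filter, mem_univ, true_and] at hp₁ hp₂ hd
      obtain ⟨hu₁, rfl⟩ := hp₁
      obtain ⟨hu₂, rfl⟩ := hp₂
      exact Prod.ext (h.injOn_dist_shallower_neighbors hu₁ hu₂ hd) rfl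
  calc #G.edgeFinset ≤ #S := card_le_card_of_surjOn _ hsurj
    _ = ∑ v, #{p ∈ S | p.2 = v} := card_eq_sum_card_fiberwise fun _ _ => mem_univ _
    _ ≤ ∑ v, T.dist r v := sum_le_sum fun v _ => hfiber v

end IsDFSTree

end

theorem stmt2_general {V : Type*} [Fintype V] (G : SimpleGraph V) [Fintype G.edgeSet]
    (k : ℕ) (hm : Fintype.card V * k ≤ G.edgeFinset.card)
    (T : SimpleGraph V) (r : V) (h : IsDFSTree G T r) :
    k ≤ Finset.univ.sup fun v : V => T.dist r v := by
  have hn : 0 < Fintype.card V := Fintype.card_pos_iff.mpr h.2.1.connected.nonempty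
  refine Nat.le_of_mul_le_mul_left (hm.trans ?_) hn
  calc G.edgeFinset.card ≤ ∑ v, T.dist r v := h.card_edgeFinset_le_sum_dist
    _ ≤ Finset.univ.card • Finset.univ.sup fun v => T.dist r v :=
      Finset.sum_le_card_nsmul _ _ _ fun v hv => Finset.le_sup (f := fun v => T.dist r v) hv
    _ = Fintype.card V * Finset.univ.sup fun v => T.dist r v := by
      rw [Finset.card_univ, smul_eq_mul]

/-- Let `G` be a finite connected simple graph with `n` vertices and `m` edges, and `k` a
natural number with `m ≥ n·k`. Then every DFS tree of `G` (rooted at any vertex) has height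
at least `k`. -/
theorem stmt2 {V : Type*} [Fintype V] (G : SimpleGraph V) [Fintype G.edgeSet]
    (hG : G.Connected) (k : ℕ) (hm : Fintype.card V * k ≤ G.edgeFinset.card)
    (T : SimpleGraph V) (r : V) (h : IsDFSTree G T r) :
    k ≤ Finset.univ.sup fun v : V => T.dist r v :=
  stmt2_general G k hm T r h
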